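/- Three distinct complex numbers z1, z2, z3 with z1+z2+z3=0 which are not collinear and form an isosceles triangle have real j-invariant j(z1,z2,z3) < 1; the value j = 0 is attained exactly when the triangle is equilateral. -/

import Mathlib

/-!
Since `j` is symmetric in the three points, we may take `z1` as the apex. The centroid is `0`,
so the axis of symmetry is the line through `0` and `z1`, and the triangle is
`-2u, u(1 + tI), u(1 - tI)` with `u ≠ 0` and real `t ≠ 0` (non-collinearity). For these points
`j = (t² - 3)³ / (t² (9 + t²)²)`, which is real, and `< 1` because
`t² (9 + t²)² - (t² - 3)³ = 27 (1 + t²)²`. It vanishes exactly when `t² = 3`, which is when the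
base `2|t||u|` equals the legs `|u| √(9 + t²)`.
-/

open Complex

noncomputable def jInvariant (z1 z2 z3 : ℂ) : ℂ :=
  -4 * (z1 * z2 + z1 * z3 + z2 * z3) ^ 3 /
    (-4 * (z1 * z2 + z1 * z3 + z2 * z3) ^ 3 - 27 * (-(z1 * z2 * z3)) ^ 2)

theorem jInvariant_swap₁₂ (z1 z2 z3 : ℂ) : jInvariant z2 z1 z3 = jInvariant z1 z2 z3 := by
  unfold jInvariant; ring_nf

theorem jInvariant_swap₁₃ (z1 z2 z3 : ℂ) : jInvariant z3 z2 z1 = jInvariant z1 z2 z3 := by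
  unfold jInvariant; ring_nf

def IsEquilateral (z1 z2 z3 : ℂ) : Prop :=
  ‖z1 - z2‖ = ‖z2 - z3‖ ∧ ‖z2 - z3‖ = ‖z3 - z1‖

theorem isEquilateral_swap₁₂ {z1 z2 z3 : ℂ} :
    IsEquilateral z2 z1 z3 ↔ IsEquilateral z1 z2 z3 := by
  unfold IsEquilateral
  rw [norm_sub_rev z2 z1, norm_sub_rev z1 z3, norm_sub_rev z3 z2]
  constructor <;> rintro ⟨h, h'⟩ <;> constructor <;> linarith

theorem isEquilateral_swap₁₃ {z1 z2 z3 : ℂ} :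
    IsEquilateral z3 z2 z1 ↔ IsEquilateral z1 z2 z3 := by
  unfold IsEquilateral
  rw [norm_sub_rev z3 z2, norm_sub_rev z2 z1, norm_sub_rev z1 z3]
  constructor <;> rintro ⟨h, h'⟩ <;> constructor <;> linarith

theorem ne_zero_of_not_collinear {z1 z2 z3 : ℂ} (hsum : z1 + z2 + z3 = 0)
    (hncol : ¬ Collinear ℝ ({z1, z2, z3} : Set ℂ)) : z1 ≠ 0 := by
  rintro rfl
  obtain rfl : z3 = -z2 := by linear_combination hsum
  refine hncol ((collinear_iff_of_mem (p₀ := 0) (by simp)).2 ⟨z2, ?_⟩)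
  rintro p (rfl | rfl | rfl)
  exacts [⟨0, by simp⟩, ⟨1, by simp⟩, ⟨-1, by simp⟩]

theorem ne_of_not_collinear {z1 z2 z3 : ℂ} (hncol : ¬ Collinear ℝ ({z1, z2, z3} : Set ℂ)) :
    z2 ≠ z3 := by
  rintro rfl
  simp [collinear_pair] at hncol

noncomputable def jIsosceles (t : ℝ) : ℝ := (t ^ 2 - 3) ^ 3 / (t ^ 2 * (9 + t ^ 2) ^ 2)

theorem jIsosceles_lt_one {t : ℝ} (ht : t ≠ 0) : jIsosceles t < 1 := by
  have : t ^ 2 * (9 + t ^ 2) ^ 2 - (t ^ 2 - 3) ^ 3 = 27 * (1 + t ^ 2) ^ 2 := by ring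
  rw [jIsosceles, div_lt_one (by positivity)]
  linarith [show 0 < 27 * (1 + t ^ 2) ^ 2 by positivity]

theorem jIsosceles_eq_zero_iff {t : ℝ} (ht : t ≠ 0) : jIsosceles t = 0 ↔ t ^ 2 = 3 := by
  have : 9 + t ^ 2 ≠ 0 := by positivity
  simp [jIsosceles, ht, this, sub_eq_zero]

theorem jInvariant_neg_two_mul {u w : ℂ} (hu : u ≠ 0) (hw : w ≠ 0) (hw9 : w ^ 2 - 9 ≠ 0) :
    jInvariant (-2 * u) (u * (1 + w)) (u * (1 - w)) =
      (w ^ 2 + 3) ^ 3 / (w ^ 2 * (w ^ 2 - 9) ^ 2) := by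
  have hΔ : -4 * (-2 * u * (u * (1 + w)) + -2 * u * (u * (1 - w)) + u * (1 + w) * (u * (1 - w))) ^ 3
      - 27 * (-(-2 * u * (u * (1 + w)) * (u * (1 - w)))) ^ 2 =
      4 * u ^ 6 * (w ^ 2 * (w ^ 2 - 9) ^ 2) := by ring
  rw [jInvariant, hΔ, div_eq_div_iff (by simp [*]) (by simp [*])]
  ring

theorem jInvariant_isosceles_param {u : ℂ} {t : ℝ} (hu : u ≠ 0) (ht : t ≠ 0) :
    jInvariant (-2 * u) (u * (1 + t * I)) (u * (1 - t * I)) = jIsosceles t := by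
  have hw2 : (t * I) ^ 2 = -(t : ℂ) ^ 2 := by rw [mul_pow, I_sq]; ring
  have h9 : 9 + (t : ℂ) ^ 2 ≠ 0 := by exact_mod_cast (by positivity : 9 + t ^ 2 ≠ (0 : ℝ))
  have h9' : -(t : ℂ) ^ 2 - 9 ≠ 0 := fun h ↦ h9 (by linear_combination -h)
  rw [jInvariant_neg_two_mul hu (by simp [ht]) (by rwa [hw2]), hw2, jIsosceles]
  push_cast
  rw [div_eq_div_iff (by simp [ht, h9']) (by simp [ht, h9])]
  ring

theorem norm_eq_norm_iff_normSq_eq {z w : ℂ} : ‖z‖ = ‖w‖ ↔ normSq z = normSq w := by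
  rw [← sq_eq_sq₀ (norm_nonneg z) (norm_nonneg w), Complex.sq_norm, Complex.sq_norm]

theorem isEquilateral_param_iff {u : ℂ} {t : ℝ} (hu : u ≠ 0) :
    IsEquilateral (-2 * u) (u * (1 + t * I)) (u * (1 - t * I)) ↔ t ^ 2 = 3 := by
  have h12 : normSq (-2 * u - u * (1 + t * I)) = normSq u * (9 + t ^ 2) := by
    rw [show -2 * u - u * (1 + t * I) = u * ((-3 : ℝ) + (-t : ℝ) * I) by push_cast; ring,
      normSq_mul, normSq_add_mul_I]
    ring
  have h23 : normSq (u * (1 + t * I) - u * (1 - t * I)) = normSq u * (4 * t ^ 2) := by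
    rw [show u * (1 + t * I) - u * (1 - t * I) = u * ((0 : ℝ) + (2 * t : ℝ) * I) by push_cast; ring,
      normSq_mul, normSq_add_mul_I]
    ring
  have h31 : normSq (u * (1 - t * I) - -2 * u) = normSq u * (9 + t ^ 2) := by
    rw [show u * (1 - t * I) - -2 * u = u * ((3 : ℝ) + (-t : ℝ) * I) by push_cast; ring,
      normSq_mul, normSq_add_mul_I]
    ring
  have hu' : normSq u ≠ 0 := normSq_eq_zero.not.2 hu
  simp only [IsEquilateral, norm_eq_norm_iff_normSq_eq, h12, h23, h31, mul_right_inj' hu']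
  constructor
  · rintro ⟨h, -⟩; linarith
  · intro h; constructor <;> linarith

theorem exists_isosceles_param {z1 z2 z3 : ℂ} (hsum : z1 + z2 + z3 = 0) (hz1 : z1 ≠ 0)
    (hiso : ‖z1 - z2‖ = ‖z1 - z3‖) :
    ∃ u : ℂ, ∃ t : ℝ, z1 = -2 * u ∧ z2 = u * (1 + t * I) ∧ z3 = u * (1 - t * I) := by
  obtain ⟨w, hw⟩ : ∃ w, w = (z3 - z2) / z1 := ⟨_, rfl⟩
  have hz2 : z2 = -z1 / 2 * (1 + w) := by rw [hw]; field_simp; linear_combination hsum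
  have hz3 : z3 = -z1 / 2 * (1 - w) := by rw [hw]; field_simp; linear_combination hsum
  have hre : w.re = 0 := by
    have h : ‖(3 : ℂ) + w‖ = ‖(3 : ℂ) - w‖ := by
      have hu : ‖z1 / 2‖ ≠ 0 := by simpa using hz1
      rw [hz2, hz3, show z1 - -z1 / 2 * (1 + w) = z1 / 2 * (3 + w) by ring,
        show z1 - -z1 / 2 * (1 - w) = z1 / 2 * (3 - w) by ring, norm_mul, norm_mul] at hiso
      exact mul_left_cancel₀ hu hiso
    rw [norm_eq_norm_iff_normSq_eq, normSq_apply, normSq_apply] at h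
    simp only [add_re, sub_re, add_im, sub_im, re_ofNat, im_ofNat] at h
    nlinarith
  refine ⟨-z1 / 2, w.im, by ring, ?_, ?_⟩
  · rw [hz2]; congr; apply Complex.ext <;> simp [hre]
  · rw [hz3]; congr; apply Complex.ext <;> simp [hre]

theorem jInvariant_of_apex {z1 z2 z3 : ℂ} (hsum : z1 + z2 + z3 = 0)
    (hncol : ¬ Collinear ℝ ({z1, z2, z3} : Set ℂ)) (hiso : ‖z1 - z2‖ = ‖z1 - z3‖) :
    (jInvariant z1 z2 z3).im = 0 ∧ (jInvariant z1 z2 z3).re < 1 ∧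
      (jInvariant z1 z2 z3 = 0 ↔ IsEquilateral z1 z2 z3) := by
  have hz1 := ne_zero_of_not_collinear hsum hncol
  have h23 := ne_of_not_collinear hncol
  obtain ⟨u, t, rfl, rfl, rfl⟩ := exists_isosceles_param hsum hz1 hiso
  have hu : u ≠ 0 := by simpa using hz1
  have ht : t ≠ 0 := by rintro rfl; simp at h23
  rw [jInvariant_isosceles_param hu ht, isEquilateral_param_iff hu, ofReal_eq_zero,
    jIsosceles_eq_zero_iff ht]
  exact ⟨ofReal_im _, (ofReal_re _).trans_lt (jIsosceles_lt_one ht), Iff.rfl⟩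

theorem jInvariant_isosceles_general (z1 z2 z3 : ℂ)
    (hsum : z1 + z2 + z3 = 0)
    (hncol : ¬ Collinear ℝ ({z1, z2, z3} : Set ℂ))
    (hiso : ‖z1 - z2‖ = ‖z1 - z3‖ ∨
            ‖z2 - z1‖ = ‖z2 - z3‖ ∨
            ‖z3 - z1‖ = ‖z3 - z2‖) :
    let g2 : ℂ := z1 * z2 + z1 * z3 + z2 * z3
    let g3 : ℂ := -(z1 * z2 * z3)
    let j : ℂ := -4 * g2 ^ 3 / (-4 * g2 ^ 3 - 27 * g3 ^ 2)
    j.im = 0 ∧ j.re < 1 ∧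
      (j = 0 ↔ (‖z1 - z2‖ = ‖z2 - z3‖ ∧
                ‖z2 - z3‖ = ‖z3 - z1‖)) := by
  show (jInvariant z1 z2 z3).im = 0 ∧ (jInvariant z1 z2 z3).re < 1 ∧
    (jInvariant z1 z2 z3 = 0 ↔ IsEquilateral z1 z2 z3)
  rcases hiso with h | h | h
  · exact jInvariant_of_apex hsum hncol h
  · have := jInvariant_of_apex (by linear_combination hsum) (by rwa [Set.insert_comm]) h
    rwa [jInvariant_swap₁₂, isEquilateral_swap₁₂] at this
  · have := jInvariant_of_apex (z1 := z3) (z2 := z2) (z3 := z1) (by linear_combination hsum)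
      (by rwa [Set.pair_comm, Set.insert_comm, Set.pair_comm]) h.symm
    rwa [jInvariant_swap₁₃, isEquilateral_swap₁₃] at this

/-- Three distinct non-collinear complex numbers summing to zero forming an isosceles
triangle have real `j`-invariant `< 1`, with `j = 0` exactly for equilateral triangles. -/
theorem jInvariant_isosceles (z1 z2 z3 : ℂ)
    (h12 : z1 ≠ z2) (h13 : z1 ≠ z3) (h23 : z2 ≠ z3)
    (hsum : z1 + z2 + z3 = 0)
    (hncol : ¬ Collinear ℝ ({z1, z2, z3} : Set ℂ))
    (hiso : ‖z1 - z2‖ = ‖z1 - z3‖ ∨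
            ‖z2 - z1‖ = ‖z2 - z3‖ ∨
            ‖z3 - z1‖ = ‖z3 - z2‖) :
    let g2 : ℂ := z1 * z2 + z1 * z3 + z2 * z3
    let g3 : ℂ := -(z1 * z2 * z3)
    let j : ℂ := -4 * g2 ^ 3 / (-4 * g2 ^ 3 - 27 * g3 ^ 2)
    j.im = 0 ∧ j.re < 1 ∧
      (j = 0 ↔ (‖z1 - z2‖ = ‖z2 - z3‖ ∧
                ‖z2 - z3‖ = ‖z3 - z1‖)) :=
  jInvariant_isosceles_general z1 z2 z3 hsum hncol hiso
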